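/- arXiv:2602.00651 — 8 statements merged into one kernel-verified Lean document; each statement's English description precedes it below -/
import Mathlib

section
/- For every natural number n and every element q of a commutative ring R, the generating function of the inversion number over the symmetric group factorizes: ∑_{σ ∈ S_n} q^{inv(σ)} = ∏_{i=1}^{n} (1 + q + q² + ⋯ + q^{i−1}). -/
/-!
Inserting the largest value `n` at position `k` into a permutation of `{0,…,n−1}` gives a
bijection `S_n × {0,…,n} ≃ S_{n+1}`, and the inserted value creates exactly `n − k` new
inversions (with the `n − k` entries to its right) while leaving the old ones in place.
Hence passing from `S_n` to `S_{n+1}` multiplies the generating function by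
`∑_{k ≤ n} q^{n−k} = 1 + q + ⋯ + qⁿ`.
-/

open Equiv Finset

/-- The inversion number of a permutation of `{0,…,n−1}`: the number of pairs
`(i,j)` with `i < j` and `σ i > σ j`. -/
def invNum {n : ℕ} (σ : Equiv.Perm (Fin n)) : ℕ :=
  (Finset.univ.filter fun p : Fin n × Fin n => p.1 < p.2 ∧ σ p.2 < σ p.1).card

lemma invNum_eq_sum_card {n : ℕ} (σ : Perm (Fin n)) :
    invNum σ = ∑ a, #{b | a < b ∧ σ b < σ a} := by
  simp only [invNum, card_filter, Fintype.sum_prod_type]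

namespace Equiv.Perm

variable {n : ℕ}

/-- The permutation of `Fin (n + 1)` sending `k` to `n` and `k.succAbove i` to `σ i`. -/
def insertMax (σ : Perm (Fin n)) (k : Fin (n + 1)) : Perm (Fin (n + 1)) :=
  (finSuccEquiv' k).trans (σ.optionCongr.trans (finSuccEquiv' (Fin.last n)).symm)

@[simp]
lemma insertMax_apply_self (σ : Perm (Fin n)) (k : Fin (n + 1)) :
    insertMax σ k k = Fin.last n := by
  simp [insertMax, finSuccEquiv'_at]

@[simp]
lemma insertMax_apply_succAbove (σ : Perm (Fin n)) (k : Fin (n + 1)) (i : Fin n) :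
    insertMax σ k (k.succAbove i) = (σ i).castSucc := by
  simp [insertMax, finSuccEquiv'_succAbove, Fin.succAbove_last]

lemma card_inversions_insertMax_self (σ : Perm (Fin n)) (k : Fin (n + 1)) :
    #{b | k < b ∧ insertMax σ k b < insertMax σ k k} = n - k := by
  have h_lt_last : ∀ b, k < b → insertMax σ k b < insertMax σ k k := fun b hkb => by
    rw [insertMax_apply_self, Fin.lt_last_iff_ne_last, ← insertMax_apply_self σ k,
      (insertMax σ k).injective.ne_iff]
    exact hkb.ne'
  rw [filter_congr fun b _ => and_iff_left_of_imp (h_lt_last b), filter_lt_eq_Ioi, Fin.card_Ioi,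
    Nat.add_sub_cancel]

lemma card_inversions_insertMax_succAbove (σ : Perm (Fin n)) (k : Fin (n + 1)) (a : Fin n) :
    #{b | k.succAbove a < b ∧ insertMax σ k b < insertMax σ k (k.succAbove a)} =
      #{b | a < b ∧ σ b < σ a} := by
  rw [card_filter, card_filter, Fin.sum_univ_succAbove _ k]
  simp [Fin.succAbove_lt_succAbove_iff, (Fin.castSucc_lt_last (σ a)).not_gt]

lemma invNum_insertMax (σ : Perm (Fin n)) (k : Fin (n + 1)) :
    invNum (insertMax σ k) = invNum σ + (n - k) := by
  rw [invNum_eq_sum_card, Fin.sum_univ_succAbove _ k, card_inversions_insertMax_self,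
    invNum_eq_sum_card]
  simp only [card_inversions_insertMax_succAbove]
  exact add_comm _ _

lemma insertMax_injective :
    Function.Injective fun p : Perm (Fin n) × Fin (n + 1) => insertMax p.1 p.2 := by
  rintro ⟨σ, k⟩ ⟨τ, l⟩ h
  simp only at h
  obtain rfl : k = l := (insertMax τ l).injective <| by
    rw [insertMax_apply_self, ← h, insertMax_apply_self]
  refine Prod.ext (Equiv.ext fun i => Fin.castSucc_injective _ ?_) rfl
  simpa using congr($h (k.succAbove i))

noncomputable def insertMaxEquiv (n : ℕ) : Perm (Fin n) × Fin (n + 1) ≃ Perm (Fin (n + 1)) :=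
  Equiv.ofBijective _ <| (Fintype.bijective_iff_injective_and_card _).2
    ⟨insertMax_injective, by simp [Fintype.card_perm, Nat.factorial_succ, mul_comm]⟩

end Equiv.Perm

lemma Fin.sum_pow_sub_eq_sum_range {R : Type*} [Semiring R] (q : R) (n : ℕ) :
    ∑ k : Fin (n + 1), q ^ (n - k) = ∑ j ∈ range (n + 1), q ^ j := by
  rw [Fin.sum_univ_eq_sum_range (fun k => q ^ (n - k)), ← sum_range_reflect (q ^ ·),
    Nat.add_sub_cancel]

/-- The generating function of the inversion number over the symmetric group factorizes:
`∑_{σ ∈ S_n} q^{inv σ} = ∏_{i=1}^{n} (1 + q + q² + ⋯ + q^{i−1})`. -/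
theorem sum_q_pow_invNum_eq_prod {R : Type*} [CommRing R] (q : R) (n : ℕ) :
    ∑ σ : Equiv.Perm (Fin n), q ^ invNum σ =
      ∏ i ∈ Finset.range n, ∑ j ∈ Finset.range (i + 1), q ^ j := by
  induction n with
  | zero => simp [invNum]
  | succ n ih =>
    rw [← (Perm.insertMaxEquiv n).sum_comp, Fintype.sum_prod_type]
    simp only [Perm.insertMaxEquiv, Equiv.ofBijective_apply, Perm.invNum_insertMax, pow_add]
    rw [← sum_mul_sum, ih, prod_range_succ, Fin.sum_pow_sub_eq_sum_range]
end

section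
/- For every natural numbers 0 ≤ k ≤ n and every element q of a commutative ring R, the sum of q^{inv(τ)} over all (k, n−k)-shuffles τ equals the Gaussian binomial coefficient binom(n,k)_q. -/
/-- A `(k, n−k)`-shuffle: a permutation of `{0,…,n−1}` strictly increasing on
`{0,…,k−1}` and strictly increasing on `{k,…,n−1}`. -/
def IsShuffle (n k : ℕ) (τ : Equiv.Perm (Fin n)) : Prop :=
  (∀ i j : Fin n, i < j → (j : ℕ) < k → τ i < τ j) ∧
  (∀ i j : Fin n, i < j → k ≤ (i : ℕ) → τ i < τ j)

instance (n k : ℕ) (τ : Equiv.Perm (Fin n)) : Decidable (IsShuffle n k τ) := by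
  unfold IsShuffle; infer_instance

/-- The Gaussian binomial coefficient `binom(n,k)_q`, defined recursively by
`binom(n,0)_q = 1`, `binom(n,k)_q = 0` for `k > n`, and
`binom(n,k)_q = binom(n−1,k−1)_q + q^k · binom(n−1,k)_q` for `1 ≤ k ≤ n`. -/
def qBinom {R : Type*} [CommRing R] (q : R) : ℕ → ℕ → R
  | _, 0 => 1
  | 0, _ + 1 => 0
  | n + 1, k + 1 => qBinom q n k + q ^ (k + 1) * qBinom q n (k + 1)

section ShuffleAux

variable {R : Type*} [CommRing R] (q : R)

lemma qBinom_zero_right (n : ℕ) : qBinom q n 0 = 1 := by cases n <;> rfl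

lemma qBinom_succ_succ (n k : ℕ) :
    qBinom q (n + 1) (k + 1) = qBinom q n k + q ^ (k + 1) * qBinom q n (k + 1) := rfl

lemma qBinom_eq_zero : ∀ {n k : ℕ}, n < k → qBinom q n k = 0
  | 0, k + 1, _ => rfl
  | n + 1, k + 1, h => by
    rw [qBinom_succ_succ, qBinom_eq_zero (show n < k by omega),
      qBinom_eq_zero (show n < k + 1 by omega)]
    ring

lemma qBinom_self : ∀ n : ℕ, qBinom q n n = 1
  | 0 => rfl
  | n + 1 => by
    rw [qBinom_succ_succ, qBinom_self n, qBinom_eq_zero q (show n < n + 1 by omega)]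
    ring

lemma qBinom_one (n : ℕ) : qBinom q n 1 = ∑ i ∈ Finset.range n, q ^ i := by
  induction n with
  | zero => simp [qBinom]
  | succ n ih =>
    rw [show (1 : ℕ) = 0 + 1 from rfl, qBinom_succ_succ, qBinom_zero_right, ih,
      Finset.sum_range_succ', Finset.mul_sum]
    simp [pow_succ, mul_comm]
    ring

lemma qBinom_rec' : ∀ n k : ℕ, k ≤ n →
    qBinom q (n + 1) (k + 1) = qBinom q n (k + 1) + q ^ (n - k) * qBinom q n k
  | n, 0, _ => by
    rw [qBinom_one q (n + 1), qBinom_one q n, Nat.sub_zero, qBinom_zero_right,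
      Finset.sum_range_succ]
    ring
  | n + 1, k + 1, h => by
    have hkn : k ≤ n := by omega
    rcases eq_or_lt_of_le hkn with rfl | hlt
    · rw [Nat.sub_self, pow_zero, qBinom_self, qBinom_self,
        qBinom_eq_zero q (show k + 1 < k + 1 + 1 by omega)]
      ring
    · have h2 : k + 1 ≤ n := hlt
      have h3 : q ^ (k + 2) * q ^ (n - k - 1) = q ^ (n - k) * q ^ (k + 1) := by
        rw [← pow_add, ← pow_add]; congr 1; omega
      conv_lhs => rw [qBinom_succ_succ, qBinom_rec' n k hkn, qBinom_rec' n (k + 1) h2]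
      conv_rhs => rw [qBinom_succ_succ, qBinom_succ_succ]
      rw [show n - (k + 1) = n - k - 1 by omega, show n + 1 - (k + 1) = n - k by omega]
      linear_combination h3 * qBinom q n (k + 1)


def statA (S : Finset ℕ) : ℕ := ∑ a ∈ S, (Finset.range a \ S).card

lemma statA_insert_top {n : ℕ} {S : Finset ℕ} (hS : S ⊆ Finset.range n) :
    statA (insert n S) = (n - S.card) + statA S := by
  have hn : n ∉ S := fun h => by simpa using hS h
  rw [statA, Finset.sum_insert hn, Finset.sdiff_insert_of_notMem (by simp) S,
    Finset.card_sdiff_of_subset hS, Finset.card_range]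
  congr 1
  refine Finset.sum_congr rfl fun a ha => ?_
  have : n ∉ Finset.range a := by
    have := Finset.mem_range.1 (hS ha); simp; omega
  rw [Finset.sdiff_insert_of_notMem this]

lemma sum_stat {R : Type*} [CommRing R] (q : R) (n : ℕ) : ∀ k : ℕ,
    ∑ S ∈ (Finset.range n).powersetCard k, q ^ statA S = qBinom q n k := by
  induction n with
  | zero =>
    rintro (_ | k)
    · simp [statA, qBinom]
    · rw [Finset.range_zero, Finset.powersetCard_eq_empty.2 (by simp), Finset.sum_empty]
      exact (qBinom_eq_zero q (by omega)).symm
  | succ n ih =>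
    rintro (_ | k)
    · simp [statA, qBinom_zero_right]
    rcases le_or_gt (k + 1) (n + 1) with h | h
    · have hkn : k ≤ n := by omega
      have hdisj : Disjoint ((Finset.range n).powersetCard (k+1))
          (((Finset.range n).powersetCard k).image (insert n)) := by
        rw [Finset.disjoint_left]
        intro S hS hS'
        obtain ⟨T, hT, rfl⟩ := Finset.mem_image.1 hS'
        have : insert n T ⊆ Finset.range n := (Finset.mem_powersetCard.1 hS).1
        have := this (Finset.mem_insert_self n T)
        simp at this
      rw [Finset.range_add_one, Finset.powersetCard_succ_insert (by simp) k,
        Finset.sum_union hdisj, Finset.sum_image ?_, qBinom_rec' q n k hkn, ih]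
      · congr 1
        rw [← ih k, Finset.mul_sum]
        refine Finset.sum_congr rfl fun S hS => ?_
        obtain ⟨hsub, hcard⟩ := Finset.mem_powersetCard.1 hS
        rw [statA_insert_top hsub, hcard, pow_add]
      · intro S hS T hT hins
        have hnS : n ∉ S := fun hc => by
          simpa using (Finset.mem_powersetCard.1 hS).1 hc
        have hnT : n ∉ T := fun hc => by
          simpa using (Finset.mem_powersetCard.1 hT).1 hc
        rw [← Finset.erase_insert hnS, ← Finset.erase_insert hnT, hins]
    · rw [Finset.powersetCard_eq_empty.2 (by simp; omega), qBinom_eq_zero q (by omega),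
        Finset.sum_empty]

def shufSet (n k : ℕ) (τ : Equiv.Perm (Fin n)) : Finset ℕ :=
  (Finset.univ.filter fun i : Fin n => (i : ℕ) < k).image (fun i => (τ i : ℕ))

lemma mem_shufSet {n k : ℕ} {τ : Equiv.Perm (Fin n)} {x : ℕ} :
    x ∈ shufSet n k τ ↔ ∃ i : Fin n, (i : ℕ) < k ∧ (τ i : ℕ) = x := by
  simp [shufSet]

lemma shufSet_subset {n k : ℕ} (τ : Equiv.Perm (Fin n)) :
    shufSet n k τ ⊆ Finset.range n := by
  intro x hx
  obtain ⟨i, _, rfl⟩ := mem_shufSet.1 hx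
  exact Finset.mem_range.2 (τ i).2

lemma filter_lt_card {n k : ℕ} (hk : k ≤ n) :
    (Finset.univ.filter fun i : Fin n => (i : ℕ) < k).card = k := by
  have : (Finset.univ.filter fun i : Fin n => (i : ℕ) < k)
      = (Finset.range k).attachFin (fun m hm => lt_of_lt_of_le (Finset.mem_range.1 hm) hk) := by
    ext a; simp [Finset.mem_attachFin]
  rw [this, Finset.card_attachFin, Finset.card_range]

lemma card_shufSet {n k : ℕ} (hk : k ≤ n) (τ : Equiv.Perm (Fin n)) :
    (shufSet n k τ).card = k := by
  rw [shufSet, Finset.card_image_of_injective _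
    (show Function.Injective (fun i => ((τ i : ℕ))) from
      fun a b h => τ.injective (Fin.val_injective h)), filter_lt_card hk]

lemma invNum_eq_statA {n k : ℕ} {τ : Equiv.Perm (Fin n)} (hτ : IsShuffle n k τ) :
    invNum τ = statA (shufSet n k τ) := by
  classical
  set S := shufSet n k τ with hS
  have hcs : statA S = (S.sigma fun a => Finset.range a \ S).card := by
    rw [Finset.card_sigma, statA]
  rw [invNum, hcs]
  refine Finset.card_bij (fun p _ => ⟨(τ p.1 : ℕ), (τ p.2 : ℕ)⟩) ?_ ?_ ?_
  · rintro ⟨i, j⟩ hp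
    obtain ⟨hij, hinv⟩ := (Finset.mem_filter.1 hp).2
    have hj : k ≤ (j : ℕ) := by
      by_contra hc
      exact absurd (hτ.1 i j hij (by omega)) (by simp; exact le_of_lt hinv)
    have hi : (i : ℕ) < k := by
      by_contra hc
      exact absurd (hτ.2 i j hij (by omega)) (by simp; exact le_of_lt hinv)
    refine Finset.mem_sigma.2 ⟨mem_shufSet.2 ⟨i, hi, rfl⟩, ?_⟩
    refine Finset.mem_sdiff.2 ⟨Finset.mem_range.2 hinv, ?_⟩
    intro hc
    obtain ⟨i', hi', he⟩ := mem_shufSet.1 hc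
    have : i' = j := τ.injective (Fin.val_injective he)
    omega
  · rintro ⟨i, j⟩ hp ⟨i', j'⟩ hp' he
    simp only [Sigma.mk.inj_iff, heq_eq_eq] at he
    have h1 : i = i' := τ.injective (Fin.val_injective he.1)
    have h2 : j = j' := τ.injective (Fin.val_injective he.2)
    simp [h1, h2]
  · rintro ⟨a, b⟩ hab
    obtain ⟨ha, hb⟩ := Finset.mem_sigma.1 hab
    obtain ⟨hbr, hbS⟩ := Finset.mem_sdiff.1 hb
    obtain ⟨i, hik, hia⟩ := mem_shufSet.1 ha
    have hbn : b < n := lt_trans (Finset.mem_range.1 hbr) ((hia ▸ (τ i).2))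
    set j := τ.symm ⟨b, hbn⟩ with hj
    have hτj : (τ j : ℕ) = b := by rw [hj, Equiv.apply_symm_apply]
    have hjk : k ≤ (j : ℕ) := by
      by_contra hc
      exact hbS (mem_shufSet.2 ⟨j, by omega, hτj⟩)
    have hij : i < j := by
      rw [Fin.lt_iff_val_lt_val]; omega
    refine ⟨(i, j), Finset.mem_filter.2 ⟨Finset.mem_univ _, hij, ?_⟩, ?_⟩
    · rw [Fin.lt_iff_val_lt_val, hτj, hia]
      exact Finset.mem_range.1 hbr
    · simp [hτj, hia]

section Inj2
variable {n k : ℕ}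

variable {n k : ℕ}

/-- The finset of `Fin n` corresponding to a `Finset ℕ` of values `< n`. -/
def finsetOf (S : Finset ℕ) : Finset (Fin n) :=
  Finset.univ.filter fun x : Fin n => (x : ℕ) ∈ S

lemma mem_finsetOf {S : Finset ℕ} {x : Fin n} : x ∈ (finsetOf S : Finset (Fin n)) ↔ (x : ℕ) ∈ S := by
  simp [finsetOf]

lemma card_finsetOf {S : Finset ℕ} (hS : S ⊆ Finset.range n) :
    (finsetOf S : Finset (Fin n)).card = S.card := by
  have : (finsetOf S : Finset (Fin n))
      = S.attachFin (fun m hm => Finset.mem_range.1 (hS hm)) := by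
    ext a; simp [Finset.mem_attachFin, mem_finsetOf]
  rw [this, Finset.card_attachFin]

lemma shuffle_eq_of_shufSet_eq (hk : k ≤ n) {τ τ' : Equiv.Perm (Fin n)}
    (hτ : IsShuffle n k τ) (hτ' : IsShuffle n k τ')
    (hS : shufSet n k τ = shufSet n k τ') : τ = τ' := by
  classical
  set T : Finset (Fin n) := finsetOf (shufSet n k τ) with hT
  have hTc : T.card = k := by
    rw [hT, card_finsetOf (by
      intro x hx
      obtain ⟨i, _, rfl⟩ := mem_shufSet.1 hx
      exact Finset.mem_range.2 (τ i).2), card_shufSet hk τ]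
  have hTcc : Tᶜ.card = n - k := by
    rw [Finset.card_compl, hTc, Fintype.card_fin]
  -- first block characterization, for any shuffle σ with shufSet σ = shufSet τ
  have first : ∀ σ : Equiv.Perm (Fin n), IsShuffle n k σ → shufSet n k σ = shufSet n k τ →
      (∀ (x : Fin n) (hx : (x : ℕ) < k), σ x = T.orderEmbOfFin hTc ⟨x, hx⟩) ∧
        (∀ (x : Fin n) (hx : k ≤ (x : ℕ)),
          σ x = Tᶜ.orderEmbOfFin hTcc ⟨(x : ℕ) - k, by omega⟩) := by
    intro σ hσ hσS
    have hmemT : ∀ y : Fin n, y ∈ T ↔ ∃ i : Fin n, (i : ℕ) < k ∧ σ i = y := by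
      intro y
      rw [hT, mem_finsetOf, ← hσS, mem_shufSet]
      constructor
      · rintro ⟨i, hi, he⟩; exact ⟨i, hi, Fin.val_injective he⟩
      · rintro ⟨i, hi, rfl⟩; exact ⟨i, hi, rfl⟩
    have hf : (fun i : Fin k => σ (Fin.castLE hk i)) = T.orderEmbOfFin hTc := by
      refine Finset.orderEmbOfFin_unique hTc (fun i => ?_) (fun i j hij => ?_)
      · exact (hmemT _).2 ⟨Fin.castLE hk i, i.2, rfl⟩
      · exact hσ.1 _ _ hij j.isLt
    have hg : (fun j : Fin (n - k) => σ ⟨k + (j : ℕ), by omega⟩) = Tᶜ.orderEmbOfFin hTcc := by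
      refine Finset.orderEmbOfFin_unique hTcc (fun j => ?_) (fun i j hij => ?_)
      · rw [Finset.mem_compl]
        intro hc
        obtain ⟨i, hi, he⟩ := (hmemT _).1 hc
        have : i = ⟨k + (j : ℕ), by omega⟩ := σ.injective he
        rw [this] at hi
        simp only [Fin.val_mk] at hi
        omega
      · have hv : (i : ℕ) < (j : ℕ) := hij
        exact hσ.2 ⟨k + (i : ℕ), by omega⟩ ⟨k + (j : ℕ), by omega⟩
          (by simp only [Fin.mk_lt_mk]; omega) (by simp only [Fin.val_mk]; omega)
    constructor
    · intro x hx
      have := congrFun hf ⟨(x : ℕ), hx⟩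
      simpa [show Fin.castLE hk ⟨(x : ℕ), hx⟩ = x from Fin.ext rfl] using this
    · intro x hx
      have := congrFun hg ⟨(x : ℕ) - k, by omega⟩
      simpa [show (⟨k + ((x : ℕ) - k), by omega⟩ : Fin n) = x from Fin.ext (by simp; omega)]
        using this
  ext x
  rcases lt_or_ge (x : ℕ) k with hx | hx
  · rw [(first τ hτ rfl).1 x hx, (first τ' hτ' hS.symm).1 x hx]
  · rw [(first τ hτ rfl).2 x hx, (first τ' hτ' hS.symm).2 x hx]

lemma exists_shuffle (hk : k ≤ n) {S : Finset ℕ} (hsub : S ⊆ Finset.range n)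
    (hcard : S.card = k) : ∃ τ : Equiv.Perm (Fin n), IsShuffle n k τ ∧ shufSet n k τ = S := by
  classical
  set T : Finset (Fin n) := finsetOf S with hT
  have hTc : T.card = k := by rw [hT, card_finsetOf hsub, hcard]
  have hTcc : Tᶜ.card = n - k := by rw [Finset.card_compl, hTc, Fintype.card_fin]
  set f : Fin n → Fin n := fun i =>
    if h : (i : ℕ) < k then T.orderEmbOfFin hTc ⟨i, h⟩
    else Tᶜ.orderEmbOfFin hTcc ⟨(i : ℕ) - k, by omega⟩ with hfdef
  have hfT : ∀ i : Fin n, (h : (i : ℕ) < k) → f i = T.orderEmbOfFin hTc ⟨i, h⟩ := by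
    intro i h; simp [hfdef, h]
  have hfTc : ∀ i : Fin n, (h : k ≤ (i : ℕ)) →
      f i = Tᶜ.orderEmbOfFin hTcc ⟨(i : ℕ) - k, by omega⟩ := by
    intro i h; simp [hfdef, Nat.not_lt.2 h]
  have hbij : Function.Bijective f := by
    constructor
    · intro i j he
      by_cases hi : (i : ℕ) < k <;> by_cases hj : (j : ℕ) < k
      · rw [hfT i hi, hfT j hj] at he
        have h2 := (T.orderEmbOfFin hTc).injective he
        have h3 : (i : ℕ) = (j : ℕ) := by simpa using h2
        exact Fin.ext h3
      · rw [hfT i hi, hfTc j (by omega)] at he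
        have h1 := T.orderEmbOfFin_mem hTc ⟨i, hi⟩
        have h2 := Tᶜ.orderEmbOfFin_mem hTcc ⟨(j : ℕ) - k, by omega⟩
        rw [he] at h1
        exact absurd h1 (Finset.mem_compl.1 h2)
      · rw [hfTc i (by omega), hfT j hj] at he
        have h1 := T.orderEmbOfFin_mem hTc ⟨j, hj⟩
        have h2 := Tᶜ.orderEmbOfFin_mem hTcc ⟨(i : ℕ) - k, by omega⟩
        rw [← he] at h1
        exact absurd h1 (Finset.mem_compl.1 h2)
      · rw [hfTc i (by omega), hfTc j (by omega)] at he
        have h2 := (Tᶜ.orderEmbOfFin hTcc).injective he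
        have h3 : (i : ℕ) - k = (j : ℕ) - k := by simpa using h2
        exact Fin.ext (by omega)
    · intro y
      by_cases hy : y ∈ T
      · have : y ∈ Set.range (T.orderEmbOfFin hTc) := by
          rw [Finset.range_orderEmbOfFin]; exact hy
        obtain ⟨j, hj⟩ := this
        refine ⟨⟨(j : ℕ), by omega⟩, ?_⟩
        rw [hfT _ j.2]
        convert hj using 2
      · have : y ∈ Set.range (Tᶜ.orderEmbOfFin hTcc) := by
          rw [Finset.range_orderEmbOfFin]; exact Finset.mem_compl.2 hy
        obtain ⟨j, hj⟩ := this
        refine ⟨⟨k + (j : ℕ), by omega⟩, ?_⟩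
        rw [hfTc _ (by simp)]
        convert hj using 2
        all_goals exact Fin.ext (by simp)
  refine ⟨Equiv.ofBijective f hbij, ⟨?_, ?_⟩, ?_⟩
  · intro i j hij hjk
    have hik : (i : ℕ) < k := lt_trans (Fin.lt_iff_val_lt_val.1 hij) hjk
    show f i < f j
    rw [hfT i hik, hfT j hjk]
    exact (T.orderEmbOfFin hTc).strictMono (show (⟨i, hik⟩ : Fin k) < ⟨j, hjk⟩ from hij)
  · intro i j hij hki
    have hkj : k ≤ (j : ℕ) := le_of_lt (lt_of_le_of_lt hki hij)
    show f i < f j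
    rw [hfTc i hki, hfTc j hkj]
    refine (Tᶜ.orderEmbOfFin hTcc).strictMono ?_
    rw [Fin.lt_iff_val_lt_val]
    have := Fin.lt_iff_val_lt_val.1 hij
    simp; omega
  · ext x
    rw [mem_shufSet]
    constructor
    · rintro ⟨i, hi, rfl⟩
      show (f i : ℕ) ∈ S
      rw [hfT i hi]
      exact mem_finsetOf.1 (T.orderEmbOfFin_mem hTc ⟨i, hi⟩)
    · intro hx
      have hxn : x < n := Finset.mem_range.1 (hsub hx)
      have : (⟨x, hxn⟩ : Fin n) ∈ T := by rw [hT, mem_finsetOf]; exact hx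
      have : (⟨x, hxn⟩ : Fin n) ∈ Set.range (T.orderEmbOfFin hTc) := by
        rw [Finset.range_orderEmbOfFin]; exact this
      obtain ⟨j, hj⟩ := this
      refine ⟨⟨(j : ℕ), by omega⟩, j.2, ?_⟩
      show (f _ : ℕ) = x
      rw [hfT _ j.2]
      have : (⟨(j : ℕ), by omega⟩ : Fin k) = j := Fin.ext rfl
      rw [this, hj]


end Inj2
end ShuffleAux

/-- The sum of `q^{inv τ}` over all `(k, n−k)`-shuffles `τ` equals the Gaussian binomial
coefficient `binom(n,k)_q`. -/
theorem sum_shuffles_eq_qBinom {R : Type*} [CommRing R] (q : R) (n k : ℕ) (hk : k ≤ n) :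
    ∑ τ ∈ Finset.univ.filter (fun τ : Equiv.Perm (Fin n) => IsShuffle n k τ),
      q ^ invNum τ = qBinom q n k := by
  classical
  rw [← sum_stat q n k]
  refine Finset.sum_bij (fun τ _ => shufSet n k τ) ?_ ?_ ?_ ?_
  · intro τ hτ
    exact Finset.mem_powersetCard.2 ⟨shufSet_subset τ, card_shufSet hk τ⟩
  · intro τ hτ τ' hτ' he
    exact shuffle_eq_of_shufSet_eq hk (Finset.mem_filter.1 hτ).2 (Finset.mem_filter.1 hτ').2 he
  · intro S hS
    obtain ⟨hsub, hcard⟩ := Finset.mem_powersetCard.1 hS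
    obtain ⟨τ, hτ, hτS⟩ := exists_shuffle hk hsub hcard
    exact ⟨τ, Finset.mem_filter.2 ⟨Finset.mem_univ _, hτ⟩, hτS⟩
  · intro τ hτ
    rw [invNum_eq_statA (Finset.mem_filter.1 hτ).2]
end

section
/- Let H be a bialgebra over a field K, let q ∈ K be a primitive n-th root of unity with n ≥ 2, let g ∈ H be grouplike, and let x ∈ H satisfy Δ(x) = g ⊗ x + x ⊗ 1 and g·x = q·(x·g). Then Δ(x^n) = g^n ⊗ x^n + x^n ⊗ 1, i.e. x^n is again skew-primitive (with respect to the grouplike g^n). -/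
open TensorProduct

section Aux

variable {K : Type*} [Field K]

/-- Gaussian binomial coefficients via the `q`-Pascal recursion. -/
def qb (q : K) : ℕ → ℕ → K
  | 0, 0 => 1
  | 0, _ + 1 => 0
  | m + 1, 0 => qb q m 0
  | m + 1, k + 1 => q ^ (m - k) * qb q m k + qb q m (k + 1)

lemma qb_zero (q : K) : ∀ m, qb q m 0 = 1
  | 0 => rfl
  | m + 1 => by rw [qb, qb_zero q m]

lemma qb_gt (q : K) : ∀ m k, m < k → qb q m k = 0
  | 0, k + 1, _ => rfl
  | m + 1, k + 1, h => by
    rw [qb, qb_gt q m k (by omega), qb_gt q m (k + 1) (by omega)]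
    ring

lemma qb_diag (q : K) : ∀ m, qb q m m = 1
  | 0 => rfl
  | m + 1 => by
    rw [qb, qb_gt q m (m + 1) (by omega), qb_diag q m, Nat.sub_self]
    ring

/-- The second Pascal identity. -/
lemma qb_pascal2 (q : K) : ∀ m k, qb q (m + 1) (k + 1) = qb q m k + q ^ (k + 1) * qb q m (k + 1)
  | 0, 0 => by simp [qb]
  | 0, k + 1 => by
    simp [qb, qb_gt q 0 (k + 1) (by omega), qb_gt q 0 (k + 2) (by omega)]
  | m + 1, 0 => by
    have e1 : qb q (m + 1 + 1) (0 + 1)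
        = q ^ (m + 1 - 0) * qb q (m + 1) 0 + qb q (m + 1) (0 + 1) := rfl
    have e4 : qb q (m + 1) (0 + 1) = q ^ (m - 0) * qb q m 0 + qb q m (0 + 1) := rfl
    have e2 := qb_pascal2 q m 0
    rw [qb_zero] at e1 e4 e2 ⊢
    have hp : q ^ (m + 1 - 0) = q ^ (m - 0) * q := by
      rw [Nat.sub_zero, Nat.sub_zero, pow_succ]
    linear_combination e1 + e2 - q * e4 + hp
  | m + 1, k + 1 => by
    have e1 : qb q (m + 1 + 1) (k + 1 + 1)
        = q ^ (m + 1 - (k + 1)) * qb q (m + 1) (k + 1) + qb q (m + 1) (k + 1 + 1) := rfl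
    have e4 : qb q (m + 1) (k + 1) = q ^ (m - k) * qb q m k + qb q m (k + 1) := rfl
    have d2 : qb q (m + 1) (k + 1 + 1)
        = q ^ (m - (k + 1)) * qb q m (k + 1) + qb q m (k + 1 + 1) := rfl
    have e2 := qb_pascal2 q m k
    have e3 := qb_pascal2 q m (k + 1)
    rcases le_or_gt (k + 1) m with h | h
    · rw [show m + 1 - (k + 1) = m - k from by omega] at e1
      have hp : q ^ (m - k) * q ^ (k + 1) = q ^ (k + 1 + 1) * q ^ (m - (k + 1)) := by
        rw [← pow_add, ← pow_add]; congr 1; omega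
      linear_combination e1 + q ^ (m - k) * e2 - e4 + e3 - q ^ (k + 1 + 1) * d2
        + qb q m (k + 1) * hp
    · have hs : m + 1 - (k + 1) = 0 := by omega
      have hQ : qb q (m + 1) (k + 1 + 1) = 0 := by
        rw [d2, qb_gt q m (k + 1) (by omega), qb_gt q m (k + 1 + 1) (by omega)]; ring
      rw [e1, hs, pow_zero, one_mul, hQ]; ring

lemma qb_key (q : K) (m k : ℕ) :
    (1 - q ^ (k + 1)) * qb q (m + 1) (k + 1) = (1 - q ^ (m + 1)) * qb q m k := by
  rcases le_or_gt k m with h | h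
  · have e1 : qb q (m + 1) (k + 1) = q ^ (m - k) * qb q m k + qb q m (k + 1) := rfl
    have e2 := qb_pascal2 q m k
    have h1 : q ^ (k + 1) * q ^ (m - k) = q ^ (m + 1) := by
      rw [← pow_add]; congr 1; omega
    linear_combination e2 - q ^ (k + 1) * e1 - qb q m k * h1
  · rw [qb_gt q (m + 1) (k + 1) (by omega), qb_gt q m k (by omega)]
    ring

lemma qb_middle_zero {q : K} {n : ℕ} (hq1 : q ^ n = 1)
    (hq2 : ∀ m : ℕ, 0 < m → m < n → q ^ m ≠ 1) {k : ℕ} (h0 : 0 < k) (h1 : k < n) :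
    qb q n k = 0 := by
  obtain ⟨j, rfl⟩ : ∃ j, k = j + 1 := ⟨k - 1, by omega⟩
  obtain ⟨m, rfl⟩ : ∃ m, n = m + 1 := ⟨n - 1, by omega⟩
  have key := qb_key q m j
  rw [hq1, sub_self, zero_mul] at key
  have hne : (1 : K) - q ^ (j + 1) ≠ 0 := by
    intro h
    exact hq2 (j + 1) (by omega) h1 (sub_eq_zero.mp h).symm
  exact (mul_eq_zero.mp key).resolve_left hne

variable {A : Type*} [Ring A] [Algebra K A]

lemma pow_swap {q : K} {a b : A} (hc : b * a = q • (a * b)) :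
    ∀ j, b ^ j * a = q ^ j • (a * b ^ j)
  | 0 => by simp
  | j + 1 => by
    rw [pow_succ, mul_assoc, hc, mul_smul_comm, ← mul_assoc, pow_swap hc j,
      smul_mul_assoc, pow_succ, smul_smul, mul_assoc]
    ring_nf

lemma qb_expand {q : K} {a b : A} (hc : b * a = q • (a * b)) :
    ∀ m, (a + b) ^ m = ∑ k ∈ Finset.range (m + 1), qb q m k • (a ^ k * b ^ (m - k))
  | 0 => by simp [qb]
  | m + 1 => by
    rw [pow_succ, qb_expand hc m, Finset.sum_mul]
    have step : ∀ k ∈ Finset.range (m + 1),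
        (qb q m k • (a ^ k * b ^ (m - k))) * (a + b)
          = (q ^ (m - k) * qb q m k) • (a ^ (k + 1) * b ^ (m - k))
            + qb q m k • (a ^ k * b ^ (m + 1 - k)) := by
      intro k hk
      rw [Finset.mem_range] at hk
      have t1 : (a ^ k * b ^ (m - k)) * a = q ^ (m - k) • (a ^ (k + 1) * b ^ (m - k)) := by
        rw [mul_assoc, pow_swap hc (m - k), mul_smul_comm, ← mul_assoc, ← pow_succ]
      have t2 : (a ^ k * b ^ (m - k)) * b = a ^ k * b ^ (m + 1 - k) := by
        rw [mul_assoc, ← pow_succ, show m - k + 1 = m + 1 - k from by omega]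
      rw [mul_add, smul_mul_assoc, smul_mul_assoc, t1, t2, smul_smul,
        mul_comm (qb q m k)]
    rw [Finset.sum_congr rfl step, Finset.sum_add_distrib]
    rw [Finset.sum_range_succ' (fun k => qb q m k • (a ^ k * b ^ (m + 1 - k))) m]
    rw [Finset.sum_range_succ' (fun k => qb q (m + 1) k • (a ^ k * b ^ (m + 1 - k))) (m + 1)]
    have hext : ∑ k ∈ Finset.range (m + 1), qb q m (k + 1) • (a ^ (k + 1) * b ^ (m + 1 - (k + 1)))
        = ∑ k ∈ Finset.range m, qb q m (k + 1) • (a ^ (k + 1) * b ^ (m + 1 - (k + 1))) := by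
      rw [Finset.sum_range_succ, qb_gt q m (m + 1) (by omega), zero_smul, add_zero]
    have main : (∑ k ∈ Finset.range (m + 1), (q ^ (m - k) * qb q m k) • (a ^ (k + 1) * b ^ (m - k)))
        + ∑ k ∈ Finset.range (m + 1), qb q m (k + 1) • (a ^ (k + 1) * b ^ (m + 1 - (k + 1)))
        = ∑ k ∈ Finset.range (m + 1), qb q (m + 1) (k + 1) • (a ^ (k + 1) * b ^ (m + 1 - (k + 1))) := by
      rw [← Finset.sum_add_distrib]
      refine Finset.sum_congr rfl fun k hk => ?_
      have e : qb q (m + 1) (k + 1) = q ^ (m - k) * qb q m k + qb q m (k + 1) := rfl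
      rw [e, add_smul, show m + 1 - (k + 1) = m - k from by omega]
    simp only [qb_zero]
    rw [← hext, ← main]
    abel

end Aux

/-- In a bialgebra `H` over a field `K`, if `q` is a primitive `n`-th root of unity
(`n ≥ 2`), `g` is grouplike, `x` satisfies `Δ(x) = g ⊗ x + x ⊗ 1` and `g·x = q·(x·g)`,
then `Δ(x^n) = g^n ⊗ x^n + x^n ⊗ 1`, i.e. `x^n` is again skew-primitive. -/
theorem pow_skewPrimitive_of_primitiveRoot {K H : Type*} [Field K] [Ring H] [Bialgebra K H]
    (n : ℕ) (hn : 2 ≤ n) (q : K) (hq1 : q ^ n = 1)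
    (hq2 : ∀ m : ℕ, 0 < m → m < n → q ^ m ≠ 1) (g x : H)
    (hg : Coalgebra.comul (R := K) g = g ⊗ₜ[K] g)
    (hεg : Coalgebra.counit (R := K) g = 1)
    (hx : Coalgebra.comul (R := K) x = g ⊗ₜ[K] x + x ⊗ₜ[K] 1)
    (hq : g * x = q • (x * g)) :
    Coalgebra.comul (R := K) (x ^ n) = (g ^ n) ⊗ₜ[K] (x ^ n) + (x ^ n) ⊗ₜ[K] (1 : H) := by
  set a : H ⊗[K] H := x ⊗ₜ[K] 1 with ha
  set b : H ⊗[K] H := g ⊗ₜ[K] x with hb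
  have hc : b * a = q • (a * b) := by
    rw [ha, hb, Algebra.TensorProduct.tmul_mul_tmul, Algebra.TensorProduct.tmul_mul_tmul,
      mul_one, one_mul, hq, TensorProduct.smul_tmul']
  have hab : Coalgebra.comul (R := K) x = a + b := by rw [hx, ha, hb, add_comm]
  rw [Bialgebra.comul_pow, hab, qb_expand hc n]
  obtain ⟨m, rfl⟩ : ∃ m, n = m + 2 := ⟨n - 2, by omega⟩
  rw [Finset.sum_range_succ, Finset.sum_range_succ']
  have hmid : ∀ k ∈ Finset.range (m + 1),
      qb q (m + 2) (k + 1) • (a ^ (k + 1) * b ^ (m + 2 - (k + 1))) = 0 := by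
    intro k hk
    rw [Finset.mem_range] at hk
    rw [qb_middle_zero hq1 hq2 (by omega) (by omega), zero_smul]
  rw [Finset.sum_congr rfl hmid, Finset.sum_const_zero, zero_add, qb_zero, qb_diag,
    one_smul, one_smul, Nat.sub_zero, Nat.sub_self, pow_zero, pow_zero, one_mul, mul_one]
  rw [ha, hb, Algebra.TensorProduct.tmul_pow, Algebra.TensorProduct.tmul_pow, one_pow]
end

section
/- Let H be a bialgebra over a commutative ring R, let q₁₂, q₂₁ ∈ R, let g₁, g₂ ∈ H be grouplike elements with g₁g₂ = g₂g₁, and let x₁, x₂ ∈ H satisfy Δ(x₁) = g₁ ⊗ x₁ + x₁ ⊗ 1, Δ(x₂) = g₂ ⊗ x₂ + x₂ ⊗ 1, g₁·x₂ = q₁₂·(x₂·g₁) and g₂·x₁ = q₂₁·(x₁·g₂). Then the q-commutator z := x₁x₂ − q₁₂·x₂x₁ satisfies Δ(z) = (g₁g₂) ⊗ z + z ⊗ 1 + (1 − q₁₂q₂₁)·(x₁·g₂) ⊗ x₂. -/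
open TensorProduct

/-- Coproduct of the q-commutator: in a bialgebra `H` over `R`, with commuting grouplikes
`g₁, g₂`, skew-primitives `x₁, x₂` (`Δ(xᵢ) = gᵢ ⊗ xᵢ + xᵢ ⊗ 1`) satisfying
`g₁·x₂ = q₁₂·(x₂·g₁)` and `g₂·x₁ = q₂₁·(x₁·g₂)`, the element `z = x₁x₂ − q₁₂·x₂x₁`
satisfies `Δ(z) = (g₁g₂) ⊗ z + z ⊗ 1 + (1 − q₁₂q₂₁)·(x₁·g₂) ⊗ x₂`. -/
theorem comul_qCommutator {R H : Type*} [CommRing R] [Ring H] [Bialgebra R H]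
    (q₁₂ q₂₁ : R) (g₁ g₂ x₁ x₂ : H)
    (hg₁ : Coalgebra.comul (R := R) g₁ = g₁ ⊗ₜ[R] g₁)
    (hεg₁ : Coalgebra.counit (R := R) g₁ = 1)
    (hg₂ : Coalgebra.comul (R := R) g₂ = g₂ ⊗ₜ[R] g₂)
    (hεg₂ : Coalgebra.counit (R := R) g₂ = 1)
    (hgg : g₁ * g₂ = g₂ * g₁)
    (hx₁ : Coalgebra.comul (R := R) x₁ = g₁ ⊗ₜ[R] x₁ + x₁ ⊗ₜ[R] 1)
    (hx₂ : Coalgebra.comul (R := R) x₂ = g₂ ⊗ₜ[R] x₂ + x₂ ⊗ₜ[R] 1)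
    (h12 : g₁ * x₂ = q₁₂ • (x₂ * g₁))
    (h21 : g₂ * x₁ = q₂₁ • (x₁ * g₂)) :
    Coalgebra.comul (R := R) (x₁ * x₂ - q₁₂ • (x₂ * x₁)) =
      (g₁ * g₂) ⊗ₜ[R] (x₁ * x₂ - q₁₂ • (x₂ * x₁)) +
        (x₁ * x₂ - q₁₂ • (x₂ * x₁)) ⊗ₜ[R] (1 : H) +
        (1 - q₁₂ * q₂₁) • ((x₁ * g₂) ⊗ₜ[R] x₂) := by
  have hmul : ∀ a b : H, Coalgebra.comul (R := R) (a * b) =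
      Coalgebra.comul (R := R) a * Coalgebra.comul (R := R) b := fun a b => by
    simpa using map_mul (Bialgebra.comulAlgHom R H) a b
  rw [map_sub, map_smul, hmul, hmul, hx₁, hx₂]
  simp only [mul_add, add_mul, Algebra.TensorProduct.tmul_mul_tmul, one_mul, mul_one,
    h12, h21, hgg, TensorProduct.tmul_sub, TensorProduct.sub_tmul,
    TensorProduct.tmul_smul, TensorProduct.smul_tmul', smul_smul, smul_sub, sub_smul,
    one_smul, mul_comm q₁₂ q₂₁]
  simp only [← TensorProduct.smul_tmul']
  module
end

section
/- Let H be a bialgebra over a commutative ring R, let q₁₂, q₂₁ ∈ R with q₁₂q₂₁ = 1, let g₁, g₂ ∈ H be grouplike elements with g₁g₂ = g₂g₁, and let x₁, x₂ ∈ H satisfy Δ(x₁) = g₁ ⊗ x₁ + x₁ ⊗ 1, Δ(x₂) = g₂ ⊗ x₂ + x₂ ⊗ 1, g₁·x₂ = q₁₂·(x₂·g₁) and g₂·x₁ = q₂₁·(x₁·g₂). Then the q-commutator z := x₁x₂ − q₁₂·x₂x₁ is skew-primitive: Δ(z) = (g₁g₂) ⊗ z + z ⊗ 1. -/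
open TensorProduct

/-- If moreover `q₁₂q₂₁ = 1`, the q-commutator `z = x₁x₂ − q₁₂·x₂x₁` is skew-primitive:
`Δ(z) = (g₁g₂) ⊗ z + z ⊗ 1`. -/
theorem qCommutator_skewPrimitive {R H : Type*} [CommRing R] [Ring H] [Bialgebra R H]
    (q₁₂ q₂₁ : R) (hq : q₁₂ * q₂₁ = 1) (g₁ g₂ x₁ x₂ : H)
    (hg₁ : Coalgebra.comul (R := R) g₁ = g₁ ⊗ₜ[R] g₁)
    (hεg₁ : Coalgebra.counit (R := R) g₁ = 1)
    (hg₂ : Coalgebra.comul (R := R) g₂ = g₂ ⊗ₜ[R] g₂)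
    (hεg₂ : Coalgebra.counit (R := R) g₂ = 1)
    (hgg : g₁ * g₂ = g₂ * g₁)
    (hx₁ : Coalgebra.comul (R := R) x₁ = g₁ ⊗ₜ[R] x₁ + x₁ ⊗ₜ[R] 1)
    (hx₂ : Coalgebra.comul (R := R) x₂ = g₂ ⊗ₜ[R] x₂ + x₂ ⊗ₜ[R] 1)
    (h12 : g₁ * x₂ = q₁₂ • (x₂ * g₁))
    (h21 : g₂ * x₁ = q₂₁ • (x₁ * g₂)) :
    Coalgebra.comul (R := R) (x₁ * x₂ - q₁₂ • (x₂ * x₁)) =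
      (g₁ * g₂) ⊗ₜ[R] (x₁ * x₂ - q₁₂ • (x₂ * x₁)) +
        (x₁ * x₂ - q₁₂ • (x₂ * x₁)) ⊗ₜ[R] (1 : H) := by
  simp only [map_sub, map_smul, Bialgebra.comul_mul, hx₁, hx₂, add_mul, mul_add,
    Algebra.TensorProduct.tmul_mul_tmul, mul_one, one_mul, h12, h21,
    smul_tmul', smul_smul, tmul_sub, sub_tmul, smul_add, tmul_smul, smul_sub, hgg]
  rw [hq, one_smul]
  abel
end

section
/- Let K be a field, let n ≥ 1, and let χ be a bimultiplicative form on the free abelian group ℤⁿ with values in the multiplicative group Kˣ, i.e. χ(α+β, γ) = χ(α,γ)·χ(β,γ) and χ(α, β+γ) = χ(α,β)·χ(α,γ). Write e₁,…,e_n for the standard basis. Fix an index i and suppose that for every j ≠ i there is a natural number m_j with χ(e_i,e_i)^{m_j} · χ(e_i,e_j) · χ(e_j,e_i) = 1 (Cartan case). Define β_j = e_j + m_j·e_i for j ≠ i and β_i = −e_i. Then the q-diagram is unchanged: χ(β_j, β_j) = χ(e_j, e_j) for every j, and χ(β_j, β_k) · χ(β_k, β_j) = χ(e_j, e_k) ·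 χ(e_k, e_j) for all j, k. -/
/-- Reflection at a simple root in the Cartan case does not change the q-diagram:
for a bimultiplicative form `χ : ℤⁿ × ℤⁿ → Kˣ`, an index `i`, and exponents `m_j`
(`j ≠ i`) with `χ(e_i,e_i)^{m_j}·χ(e_i,e_j)·χ(e_j,e_i) = 1`, the reflected vectors
`β_j = e_j + m_j·e_i` (`j ≠ i`), `β_i = −e_i` satisfy `χ(β_j,β_j) = χ(e_j,e_j)` and
`χ(β_j,β_k)·χ(β_k,β_j) = χ(e_j,e_k)·χ(e_k,e_j)`. -/
theorem cartan_reflection_preserves_qDiagram {K : Type*} [Field K] (n : ℕ) (hn : 1 ≤ n)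
    (χ : (Fin n → ℤ) → (Fin n → ℤ) → Kˣ)
    (hbi₁ : ∀ α β γ : Fin n → ℤ, χ (α + β) γ = χ α γ * χ β γ)
    (hbi₂ : ∀ α β γ : Fin n → ℤ, χ α (β + γ) = χ α β * χ α γ)
    (i : Fin n) (m : Fin n → ℕ)
    (hC : ∀ j : Fin n, j ≠ i →
      χ (Pi.single i 1) (Pi.single i 1) ^ (m j) *
        χ (Pi.single i 1) (Pi.single j 1) * χ (Pi.single j 1) (Pi.single i 1) = 1) :
    let e : Fin n → (Fin n → ℤ) := fun j => Pi.single j 1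
    let β : Fin n → (Fin n → ℤ) :=
      fun j => if j = i then -(e i) else e j + (m j : ℤ) • e i
    (∀ j : Fin n, χ (β j) (β j) = χ (e j) (e j)) ∧
      (∀ j k : Fin n, χ (β j) (β k) * χ (β k) (β j) = χ (e j) (e k) * χ (e k) (e j)) := by
  intro e β
  -- basic consequences of bimultiplicativity
  have h0l : ∀ γ, χ 0 γ = 1 := by
    intro γ
    have h := hbi₁ 0 0 γ
    rw [add_zero] at h
    exact (left_eq_mul.mp h)
  have h0r : ∀ γ, χ γ 0 = 1 := by
    intro γ
    have h := hbi₂ γ 0 0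
    rw [add_zero] at h
    exact (left_eq_mul.mp h)
  have hnl : ∀ α γ, χ (-α) γ = (χ α γ)⁻¹ := by
    intro α γ
    have h := hbi₁ α (-α) γ
    rw [add_neg_cancel, h0l] at h
    exact (inv_eq_of_mul_eq_one_right h.symm).symm
  have hnr : ∀ α γ, χ γ (-α) = (χ γ α)⁻¹ := by
    intro α γ
    have h := hbi₂ γ α (-α)
    rw [add_neg_cancel, h0r] at h
    exact (inv_eq_of_mul_eq_one_right h.symm).symm
  have hpl : ∀ (k : ℕ) (α γ : Fin n → ℤ), χ ((k : ℤ) • α) γ = χ α γ ^ k := by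
    intro k
    induction k with
    | zero => intro α γ; simp [h0l]
    | succ k ih =>
        intro α γ
        have : ((k + 1 : ℕ) : ℤ) • α = (k : ℤ) • α + α := by push_cast; rw [add_smul, one_smul]
        rw [this, hbi₁, ih, pow_succ]
  have hpr : ∀ (k : ℕ) (α γ : Fin n → ℤ), χ γ ((k : ℤ) • α) = χ γ α ^ k := by
    intro k
    induction k with
    | zero => intro α γ; simp [h0r]
    | succ k ih =>
        intro α γ
        have : ((k + 1 : ℕ) : ℤ) • α = (k : ℤ) • α + α := by push_cast; rw [add_smul, one_smul]
        rw [this, hbi₂, ih, pow_succ]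
  -- Cartan condition in terms of `e`
  have hC' : ∀ j : Fin n, j ≠ i →
      χ (e i) (e i) ^ (m j) * χ (e i) (e j) * χ (e j) (e i) = 1 := hC
  -- expansion lemmas
  have hexp : ∀ j k : Fin n,
      χ (e j + (m j : ℤ) • e i) (e k + (m k : ℤ) • e i)
        = χ (e j) (e k) * χ (e j) (e i) ^ m k *
          (χ (e i) (e k) ^ m j * χ (e i) (e i) ^ (m j * m k)) := by
    intro j k
    rw [hbi₁, hbi₂, hpr, hpl, hbi₂, hpr, mul_pow, ← pow_mul, Nat.mul_comm (m k) (m j)]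
  have hexpn : ∀ k : Fin n,
      χ (-(e i)) (e k + (m k : ℤ) • e i)
        = (χ (e i) (e k) * χ (e i) (e i) ^ m k)⁻¹ := by
    intro k
    rw [hnl, hbi₂, hpr]
  have hexpn' : ∀ k : Fin n,
      χ (e k + (m k : ℤ) • e i) (-(e i))
        = (χ (e k) (e i) * χ (e i) (e i) ^ m k)⁻¹ := by
    intro k
    rw [hnr, hbi₁, hpl]
  constructor
  · intro j
    by_cases hj : j = i
    · rw [hj]
      simp only [β, if_pos rfl, hnl, hnr, inv_inv]
    · simp only [β, if_neg hj, hexp]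
      have hc := hC' j hj
      rw [Units.ext_iff] at hc ⊢
      push_cast at hc ⊢
      have : (χ (e j) (e i) : K) ^ m j * ((χ (e i) (e j) : K) ^ m j *
          (χ (e i) (e i) : K) ^ (m j * m j)) = 1 := by
        calc _ = ((χ (e i) (e i) : K) ^ m j * χ (e i) (e j) * χ (e j) (e i)) ^ m j := by ring
        _ = 1 := by rw [hc, one_pow]
      rw [mul_assoc, this, mul_one]
  · intro j k
    by_cases hj : j = i <;> by_cases hk : k = i
    · rw [hj, hk]
      simp only [β, if_pos rfl, hnl, hnr, inv_inv]
    · rw [hj]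
      simp only [β, if_pos rfl, if_neg hk, hexpn, hexpn']
      have hc := hC' k hk
      rw [Units.ext_iff] at hc ⊢
      push_cast at hc ⊢
      field_simp
      calc (1 : K)
          = ((χ (e i) (e i) : K) ^ m k * χ (e i) (e k) * χ (e k) (e i)) ^ 2 := by
            rw [hc, one_pow]
        _ = _ := by ring
    · rw [hk]
      simp only [β, if_pos rfl, if_neg hj, hexpn, hexpn']
      have hc := hC' j hj
      rw [Units.ext_iff] at hc ⊢
      push_cast at hc ⊢
      field_simp
      calc (1 : K)
          = ((χ (e i) (e i) : K) ^ m j * χ (e i) (e j) * χ (e j) (e i)) ^ 2 := by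
            rw [hc, one_pow]
        _ = _ := by ring
    · simp only [β, if_neg hj, if_neg hk, hexp]
      have hcj := hC' j hj
      have hck := hC' k hk
      rw [Units.ext_iff] at hcj hck ⊢
      push_cast at hcj hck ⊢
      have key : ((χ (e j) (e i) : K) ^ m k * ((χ (e i) (e k) : K) ^ m j *
            (χ (e i) (e i) : K) ^ (m j * m k))) *
          ((χ (e k) (e i) : K) ^ m j * ((χ (e i) (e j) : K) ^ m k *
            (χ (e i) (e i) : K) ^ (m k * m j))) = 1 := by
        calc _ = ((χ (e i) (e i) : K) ^ m j * χ (e i) (e j) * χ (e j) (e i)) ^ m k *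
                ((χ (e i) (e i) : K) ^ m k * χ (e i) (e k) * χ (e k) (e i)) ^ m j := by ring
          _ = 1 := by rw [hcj, hck, one_pow, one_pow, one_mul]
      calc (χ (e j) (e k) : K) * χ (e j) (e i) ^ m k *
            ((χ (e i) (e k) : K) ^ m j * (χ (e i) (e i) : K) ^ (m j * m k)) *
            ((χ (e k) (e j) : K) * χ (e k) (e i) ^ m j *
              ((χ (e i) (e j) : K) ^ m k * (χ (e i) (e i) : K) ^ (m k * m j)))
          = (χ (e j) (e k) : K) * χ (e k) (e j) *
            (((χ (e j) (e i) : K) ^ m k * ((χ (e i) (e k) : K) ^ m j *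
              (χ (e i) (e i) : K) ^ (m j * m k))) *
            ((χ (e k) (e i) : K) ^ m j * ((χ (e i) (e j) : K) ^ m k *
              (χ (e i) (e i) : K) ^ (m k * m j)))) := by ring
        _ = _ := by rw [key, mul_one]
end

section
/- Define η : ℤ → M₂(ℤ) by η(c) = [[c, −1], [1, 0]], and let 𝒜⁺ be the set of finite integer sequences (c₁,…,c_n) with n ≥ 3 such that c_i ≥ 1 for all i, η(c₁)⋯η(c_n) = −Id, and for every 1 ≤ i ≤ n−1 both entries of the first column of the partial product η(c₁)⋯η(c_i) are nonnegative. Then every sequence in 𝒜⁺ arises from the sequence (1,1,1) by finitely many applications of the length-increasing move I: (…, c_i, c_{i+1}, …) ↦ (…, c_i+1, 1, c_{i+1}+1, …), where the move may also be applied to the cyclically consecutive pair (c_n, c₁), producing (c₁+1, c₂, …, c_{n−1}, c_n+1, 1). -/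
/-- The matrix `η(c) = [[c, −1], [1, 0]]`. -/
def eta (c : ℤ) : Matrix (Fin 2) (Fin 2) ℤ := !![c, -1; 1, 0]

/-- The product `η(c₁)⋯η(cₙ)` along a list. -/
def etaProd (l : List ℤ) : Matrix (Fin 2) (Fin 2) ℤ := (l.map eta).prod

/-- Membership in `𝒜⁺`: sequences `(c₁,…,c_n)` with `n ≥ 3`, all `c_i ≥ 1`,
`η(c₁)⋯η(cₙ) = −Id`, and nonnegative first-column entries of all proper
partial products `η(c₁)⋯η(c_i)`, `1 ≤ i ≤ n−1`. -/
def MemAPlus (l : List ℤ) : Prop :=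
  3 ≤ l.length ∧ (∀ c ∈ l, 1 ≤ c) ∧ etaProd l = -1 ∧
    ∀ i : ℕ, 1 ≤ i → i ≤ l.length - 1 →
      0 ≤ etaProd (l.take i) 0 0 ∧ 0 ≤ etaProd (l.take i) 1 0

/-- The length-increasing move `I`, applied either to a consecutive pair
`(c_i, c_{i+1}) ↦ (c_i+1, 1, c_{i+1}+1)` inside the sequence, or to the cyclically
consecutive pair `(c_n, c₁)`, producing `(c₁+1, c₂, …, c_{n−1}, c_n+1, 1)`. -/
inductive MoveI : List ℤ → List ℤ → Prop
  | interior (xs ys : List ℤ) (a b : ℤ) :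
      MoveI (xs ++ a :: b :: ys) (xs ++ (a + 1) :: 1 :: (b + 1) :: ys)
  | cyclic (a : ℤ) (mid : List ℤ) (b : ℤ) :
      MoveI (a :: (mid ++ [b])) ((a + 1) :: (mid ++ [b + 1, 1]))

lemma etaProd_cons (c : ℤ) (l : List ℤ) : etaProd (c :: l) = eta c * etaProd l := by
  simp [etaProd]
lemma etaProd_append (l₁ l₂ : List ℤ) : etaProd (l₁ ++ l₂) = etaProd l₁ * etaProd l₂ := by
  simp [etaProd]
lemma etaProd_take_succ (l : List ℤ) (k : ℕ) (h : k < l.length) :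
    etaProd (l.take (k+1)) = etaProd (l.take k) * eta (l.getD k 0) := by
  rw [List.take_succ, etaProd_append]
  congr 1
  rw [List.getD_eq_getElem _ _ h, List.getElem?_eq_getElem h]
  simp [etaProd]
lemma mul2 (A B : Matrix (Fin 2) (Fin 2) ℤ) (i j : Fin 2) :
    (A * B) i j = A i 0 * B 0 j + A i 1 * B 1 j := by
  rw [Matrix.mul_apply, Fin.sum_univ_two]
lemma col1_eq (l : List ℤ) (k : ℕ) (h : k < l.length) (i : Fin 2) :
    etaProd (l.take (k+1)) i 1 = - etaProd (l.take k) i 0 := by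
  rw [etaProd_take_succ l k h, mul2]
  simp [eta]
lemma det_etaProd (l : List ℤ) :
    etaProd l 0 0 * etaProd l 1 1 - etaProd l 0 1 * etaProd l 1 0 = 1 := by
  induction l with
  | nil => simp [etaProd, Matrix.one_apply]
  | cons c l ih =>
      rw [etaProd_cons, mul2, mul2, mul2, mul2]
      simp only [eta]
      norm_num [Matrix.cons_val_zero, Matrix.cons_val_one]
      linear_combination ih

/-- first column entries of partial products -/
def vx (l : List ℤ) (k : ℕ) : ℤ := etaProd (l.take k) 0 0
def vy (l : List ℤ) (k : ℕ) : ℤ := etaProd (l.take k) 1 0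

lemma vx_zero (l : List ℤ) : vx l 0 = 1 := by simp [vx, etaProd, Matrix.one_apply]
lemma vy_zero (l : List ℤ) : vy l 0 = 0 := by simp [vy, etaProd, Matrix.one_apply]

lemma vx_one (l : List ℤ) (h : 0 < l.length) : vx l 1 = l.getD 0 0 := by
  have h1 := etaProd_take_succ l 0 h
  rw [show (0:ℕ)+1 = 1 from rfl, List.take_zero] at h1
  rw [vx, h1]; simp [etaProd, eta]
lemma vy_one (l : List ℤ) (h : 0 < l.length) : vy l 1 = 1 := by
  have h1 := etaProd_take_succ l 0 h
  rw [show (0:ℕ)+1 = 1 from rfl, List.take_zero] at h1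
  rw [vy, h1]; simp [etaProd, eta]

lemma det_pair (l : List ℤ) (k : ℕ) (h : k < l.length) :
    vx l k * vy l (k+1) - vy l k * vx l (k+1) = 1 := by
  have hd := det_etaProd (l.take (k+1))
  rw [col1_eq l k h 0, col1_eq l k h 1] at hd
  unfold vx vy
  linarith [hd]

lemma recur_gen (l : List ℤ) (k : ℕ) (h : k + 1 < l.length) (i : Fin 2) :
    etaProd (l.take (k+2)) i 0
      = l.getD (k+1) 0 * etaProd (l.take (k+1)) i 0 - etaProd (l.take k) i 0 := by
  rw [etaProd_take_succ l (k+1) h, mul2, col1_eq l k (by omega) i]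
  simp [eta]; ring

lemma recur_x (l : List ℤ) (k : ℕ) (h : k + 1 < l.length) :
    vx l (k+2) = l.getD (k+1) 0 * vx l (k+1) - vx l k := recur_gen l k h 0
lemma recur_y (l : List ℤ) (k : ℕ) (h : k + 1 < l.length) :
    vy l (k+2) = l.getD (k+1) 0 * vy l (k+1) - vy l k := recur_gen l k h 1

lemma vx_length (l : List ℤ) (h : etaProd l = -1) : vx l l.length = -1 := by
  rw [vx, List.take_length, h]; simp [Matrix.one_apply]
lemma vy_length (l : List ℤ) (h : etaProd l = -1) : vy l l.length = 0 := by
  rw [vy, List.take_length, h]; simp [Matrix.one_apply]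

lemma eta_move (a b : ℤ) : eta (a+1) * eta 1 * eta (b+1) = eta a * eta b := by
  ext i j
  fin_cases i <;> fin_cases j <;> simp [eta, mul2] <;> ring

lemma col_move (N : Matrix (Fin 2) (Fin 2) ℤ) (a : ℤ) (i : Fin 2) :
    (N * (eta (a+1) * eta 1)) i 0 = (N * eta a) i 0 := by
  rw [mul2, mul2, mul2, mul2]
  simp [eta]

lemma base3 (a b c : ℤ) (hb : 1 ≤ b) (h : etaProd [a,b,c] = -1) :
    a = 1 ∧ b = 1 ∧ c = 1 := by
  have e11 := congrFun (congrFun h 1) 1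
  have e10 := congrFun (congrFun h 1) 0
  have e01 := congrFun (congrFun h 0) 1
  simp [etaProd_cons, etaProd, mul2, eta] at e11 e10 e01
  have hb1 : b = 1 := by linarith
  subst hb1
  constructor
  · linarith
  exact ⟨rfl, by linarith⟩

lemma decomp (l : List ℤ) (m : ℕ) (h : m + 2 < l.length) :
    l = l.take m ++ l.getD m 0 :: l.getD (m+1) 0 :: l.getD (m+2) 0 :: l.drop (m+3) := by
  conv_lhs => rw [← List.take_append_drop m l]
  congr 1
  rw [List.drop_eq_getElem_cons (by omega : m < l.length),
      List.drop_eq_getElem_cons (by omega : m+1 < l.length),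
      List.drop_eq_getElem_cons (by omega : m+2 < l.length),
      List.getD_eq_getElem _ _ (by omega), List.getD_eq_getElem _ _ (by omega),
      List.getD_eq_getElem _ _ (by omega)]

lemma exists_one (l : List ℤ) (h4 : 4 ≤ l.length) (hpos : ∀ c ∈ l, 1 ≤ c)
    (hprod : etaProd l = -1)
    (hpp : ∀ i : ℕ, 1 ≤ i → i ≤ l.length - 1 → 0 ≤ vx l i ∧ 0 ≤ vy l i) :
    ∃ m, m + 3 ≤ l.length ∧ l.getD (m+1) 0 = 1 ∧ 2 ≤ l.getD m 0 ∧ 2 ≤ l.getD (m+2) 0 := by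
  set n := l.length with hn
  have hd : ∀ k, k < n → 1 ≤ l.getD k 0 := by
    intro k hk
    rw [List.getD_eq_getElem _ _ hk]
    exact hpos _ (List.getElem_mem _)
  have hnn : ∀ k, k ≤ n - 1 → 0 ≤ vx l k ∧ 0 ≤ vy l k := by
    intro k hk
    rcases Nat.eq_zero_or_pos k with rfl | hk1
    · rw [vx_zero, vy_zero]; norm_num
    · exact hpp k hk1 hk
  have hs : ∀ k, k ≤ n - 1 → 1 ≤ vx l k + vy l k := by
    intro k hk
    obtain ⟨h1, h2⟩ := hnn k hk
    by_contra hcon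
    have hx0 : vx l k = 0 := by linarith
    have hy0 : vy l k = 0 := by linarith
    have hdet := det_pair l k (by omega)
    rw [hx0, hy0] at hdet
    simp at hdet
  have hxn : vx l n = -1 := vx_length l hprod
  have hyn : vy l n = 0 := vy_length l hprod
  obtain ⟨i, hiT, hif⟩ := Finset.exists_max_image (Finset.Icc 1 (n-1))
    (fun j => (n:ℤ) * (vx l j + vy l j) + j) ⟨1, by rw [Finset.mem_Icc]; omega⟩
  rw [Finset.mem_Icc] at hiT
  obtain ⟨hi1, hi2⟩ := hiT
  have hnz : (4:ℤ) ≤ (n:ℤ) := by exact_mod_cast h4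
  have hmax : ∀ k, 1 ≤ k → k ≤ n-1 → vx l k + vy l k ≤ vx l i + vy l i := by
    intro k h1 h2
    by_contra hcon
    push_neg at hcon
    have hfk := hif k (Finset.mem_Icc.mpr ⟨h1, h2⟩)
    have hk' : (1:ℤ) ≤ (k:ℤ) := by exact_mod_cast h1
    have hi' : (i:ℤ) ≤ (n:ℤ) - 1 := by
      have : i + 1 ≤ n := by omega
      have := (Nat.cast_le (α := ℤ)).mpr this
      push_cast at this
      linarith
    have hmul : (n:ℤ) * (vx l i + vy l i + 1) ≤ (n:ℤ) * (vx l k + vy l k) := by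
      apply mul_le_mul_of_nonneg_left _ (by linarith)
      linarith
    linarith
  have hlast : ∀ k, 1 ≤ k → k ≤ n-1 → vx l k + vy l k = vx l i + vy l i → k ≤ i := by
    intro k h1 h2 he
    have hfk := hif k (Finset.mem_Icc.mpr ⟨h1, h2⟩)
    rw [he] at hfk
    have : (k:ℤ) ≤ (i:ℤ) := by linarith
    exact_mod_cast this
  have hsi1 : 1 ≤ vx l i + vy l i := hs i hi2
  have hstep : vx l (i+1) + vy l (i+1) < vx l i + vy l i := by
    rcases lt_or_eq_of_le hi2 with hlt | heq
    · have h2' : i+1 ≤ n-1 := by omega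
      have hle := hmax (i+1) (by omega) h2'
      rcases lt_or_eq_of_le hle with h | h
      · exact h
      · have := hlast (i+1) (by omega) h2' h
        omega
    · have hin : i + 1 = n := by omega
      rw [hin, hxn, hyn]
      linarith
  obtain ⟨m, rfl⟩ : ∃ m, i = m + 1 := ⟨i - 1, by omega⟩
  have e12 : m + 1 + 1 = m + 2 := by omega
  rw [e12] at hstep
  have hm1n : m + 1 < n := by omega
  have hrx := recur_x l m hm1n
  have hry := recur_y l m hm1n
  have hsm : vx l m + vy l m ≤ vx l (m+1) + vy l (m+1) := by
    rcases Nat.eq_zero_or_pos m with rfl | hm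
    · rw [vx_zero, vy_zero]; linarith
    · exact hmax m hm (by omega)
  have hc1 : l.getD (m+1) 0 = 1 := by
    have hd1 := hd (m+1) hm1n
    by_contra hne
    have h2d : 2 ≤ l.getD (m+1) 0 := by omega
    nlinarith [hrx, hry, hstep, hsm, h2d, hsi1]
  rw [hc1, one_mul] at hrx hry
  have hm3 : m + 3 ≤ n := by
    by_contra hcon
    have hmn : m + 2 = n := by omega
    have hm1 : 1 ≤ m := by omega
    have := hmax m hm1 (by omega)
    rw [hmn] at hrx hry
    rw [hxn] at hrx
    rw [hyn] at hry
    linarith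
  have hcm : 2 ≤ l.getD m 0 := by
    have hdm : 1 ≤ l.getD m 0 := hd m (by omega)
    by_contra hcon
    have h1 : l.getD m 0 = 1 := by omega
    rcases Nat.eq_zero_or_pos m with rfl | hm
    · -- m = 0, so c₁ = c₂ = 1
      have hv1x : vx l 1 = 1 := by rw [vx_one l (by omega)]; simpa using h1
      have hv1y : vy l 1 = 1 := vy_one l (by omega)
      have hr2x := recur_x l 0 (by omega)
      have hr2y := recur_y l 0 (by omega)
      rw [show (0:ℕ)+1 = 1 from rfl] at hr2x hr2y
      rw [show (0:ℕ)+2 = 2 from rfl] at hr2x hr2y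
      rw [hc1, one_mul, hv1x, vx_zero] at hr2x
      rw [hc1, one_mul, hv1y, vy_zero] at hr2y
      have hr3x := recur_x l 1 (by omega)
      rw [show (1:ℕ)+1 = 2 from rfl, show (1:ℕ)+2 = 3 from rfl] at hr3x
      rw [hr2x] at hr3x
      have h3 := (hpp 3 (by omega) (by omega)).1
      rw [hr3x] at h3
      rw [hv1x] at h3
      simp at h3
    · obtain ⟨p, rfl⟩ : ∃ p, m = p + 1 := ⟨m-1, by omega⟩
      have hrx2 := recur_x l p (by omega)
      have hry2 := recur_y l p (by omega)
      rw [h1, one_mul] at hrx2 hry2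
      have hsp : 1 ≤ vx l p + vy l p := hs p (by omega)
      have hsm' : vx l (p+1) + vy l (p+1) ≤ vx l (p+1+1) + vy l (p+1+1) := by
        have := hmax (p+1) (by omega) (by omega)
        linarith [hsm]
      rw [show p + 1 + 1 = p + 2 from by omega] at hsm'
      linarith
  have hcm2 : 2 ≤ l.getD (m+2) 0 := by
    have hdm : 1 ≤ l.getD (m+2) 0 := hd (m+2) (by omega)
    by_contra hcon
    have h1 : l.getD (m+2) 0 = 1 := by omega
    have hrx2 := recur_x l (m+1) (by omega)
    have hry2 := recur_y l (m+1) (by omega)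
    rw [h1, one_mul] at hrx2 hry2
    rw [show m + 1 + 2 = m + 3 from by omega, show m + 1 + 1 = m + 2 from by omega]
      at hrx2 hry2
    rcases lt_or_eq_of_le hm3 with hlt | heq
    · have hA := hnn (m+3) (by omega)
      have hB := hnn m (by omega)
      have hsm1 := hs m (by omega)
      linarith [hA.1, hA.2, hB.1, hB.2]
    · rw [heq, hxn] at hrx2
      rw [heq, hyn] at hry2
      have hxm : vx l m = 1 := by linarith
      have hym : vy l m = 0 := by linarith
      obtain ⟨p, rfl⟩ : ∃ p, m = p + 1 := ⟨m-1, by omega⟩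
      have hdet := det_pair l p (by omega)
      rw [hxm, hym] at hdet
      have := (hnn p (by omega)).2
      nlinarith [hdet]
  exact ⟨m, hm3, hc1, hcm, hcm2⟩
lemma take_mid3 (xs ys : List ℤ) (u v w : ℤ) (t : ℕ) :
    (xs ++ u :: v :: w :: ys).take (xs.length + 3 + t) = xs ++ u :: v :: w :: ys.take t := by
  rw [show xs.length + 3 + t = xs.length + (t+1+1+1) by omega, List.take_append]
  simp [List.take_succ_cons]

lemma take_mid2 (xs ys : List ℤ) (u v : ℤ) (t : ℕ) :
    (xs ++ u :: v :: ys).take (xs.length + 2 + t) = xs ++ u :: v :: ys.take t := by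
  rw [show xs.length + 2 + t = xs.length + (t+1+1) by omega, List.take_append]
  simp [List.take_succ_cons]

lemma take_mid1 (xs ys : List ℤ) (u : ℤ) :
    (xs ++ u :: ys).take (xs.length + 1) = xs ++ [u] := by
  rw [List.take_append]
  simp

lemma take_two (ys : List ℤ) (u v w : ℤ) :
    (u :: v :: w :: ys).take 2 = [u, v] := rfl

lemma etaProd_move (xs ys : List ℤ) (a b : ℤ) :
    etaProd (xs ++ a :: b :: ys) = etaProd (xs ++ (a+1) :: 1 :: (b+1) :: ys) := by
  have h : ∀ P : Matrix (Fin 2) (Fin 2) ℤ,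
      eta (a+1) * (eta 1 * (eta (b+1) * P)) = eta a * (eta b * P) := fun P => by
    rw [← mul_assoc, ← mul_assoc, eta_move, mul_assoc]
  simp only [etaProd_append, etaProd_cons, h]

/-- Every sequence in `𝒜⁺` arises from `(1,1,1)` by finitely many applications
of the move `I`. -/
theorem mem_APlus_from_triangle (l : List ℤ) (hl : MemAPlus l) :
    Relation.ReflTransGen MoveI [1, 1, 1] l := by
  suffices H : ∀ n : ℕ, ∀ l : List ℤ, l.length = n → MemAPlus l →
      Relation.ReflTransGen MoveI [1, 1, 1] l from H l.length l rfl hl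
  intro n
  induction n using Nat.strong_induction_on with
  | _ n ih =>
    intro l hln hl
    obtain ⟨hlen, hpos, hprod, hpp⟩ := hl
    rcases eq_or_lt_of_le hlen with h3 | h4
    · -- base case: length 3
      obtain ⟨u, v, w, rfl⟩ := List.length_eq_three.mp h3.symm
      have hv : 1 ≤ v := hpos v (by simp)
      obtain ⟨hu, hv, hw⟩ := base3 u v w hv hprod
      subst hu; subst hv; subst hw
      exact Relation.ReflTransGen.refl
    · -- inductive step
      obtain ⟨m, hm3, hc1, hcm, hcm2⟩ := exists_one l (by omega) hpos hprod
        (fun i h1 h2 => hpp i h1 h2)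
      set xs := l.take m with hxs
      set ys := l.drop (m+3) with hys
      set a := l.getD m 0 - 1 with ha
      set b := l.getD (m+2) 0 - 1 with hb
      have hxsl : xs.length = m := by
        rw [hxs, List.length_take]; omega
      have hysl : ys.length = l.length - (m+3) := by
        rw [hys, List.length_drop]
      have hsplit : l = xs ++ (a+1) :: 1 :: (b+1) :: ys := by
        have hdec := decomp l m (by omega)
        rw [hc1] at hdec
        rw [show a + 1 = l.getD m 0 by ring, show b + 1 = l.getD (m+2) 0 by ring]
        exact hdec
      set l' := xs ++ a :: b :: ys with hl'
      have hlen' : l'.length = l.length - 1 := by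
        rw [hl']; simp only [List.length_append, List.length_cons]
        omega
      have hAP : MemAPlus l' := by
        refine ⟨by omega, ?_, ?_, ?_⟩
        · -- entries ≥ 1
          intro c hc
          rw [hl'] at hc
          rcases List.mem_append.mp hc with h | h
          · exact hpos c (List.take_subset m l h)
          · rcases List.mem_cons.mp h with rfl | h
            · omega
            · rcases List.mem_cons.mp h with rfl | h
              · omega
              · exact hpos c (List.drop_subset (m+3) l h)
        · -- product
          rw [hl', etaProd_move, ← hsplit, hprod]
        · -- partial positivity
          intro k hk1 hk2
          rw [hlen'] at hk2
          rcases lt_trichotomy k (m+1) with hkm | hkm | hkm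
          · have hkm' : k ≤ m := by omega
            have htake : l'.take k = l.take k := by
              rw [hl', List.take_append_of_le_length (by omega), hxs, List.take_take]
              congr 1
              omega
            rw [htake]
            exact hpp k hk1 (by omega)
          · subst hkm
            have e1 : l'.take (m+1) = xs ++ [a] := by
              rw [hl', show m + 1 = xs.length + 1 by omega, take_mid1]
            have e2 : l.take (m+2) = xs ++ [a+1, 1] := by
              conv_lhs => rw [hsplit]
              rw [show m + 2 = xs.length + 2 + 0 by omega, take_mid2]
              simp
            have key : ∀ i : Fin 2,
                etaProd (l'.take (m+1)) i 0 = etaProd (l.take (m+2)) i 0 := by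
              intro i
              rw [e1, e2, etaProd_append, etaProd_append]
              have h1 : etaProd [a] = eta a := by simp [etaProd_cons, etaProd]
              have h2 : etaProd [a+1, 1] = eta (a+1) * eta 1 := by
                simp [etaProd_cons, etaProd]
              rw [h1, h2, col_move]
            have hp := hpp (m+2) (by omega) (by omega)
            exact ⟨by rw [key 0]; exact hp.1, by rw [key 1]; exact hp.2⟩
          · obtain ⟨t, rfl⟩ : ∃ t, k = m + 2 + t := ⟨k - (m+2), by omega⟩
            have e1 : l'.take (m+2+t) = xs ++ a :: b :: ys.take t := by
              rw [hl', show m + 2 + t = xs.length + 2 + t by omega, take_mid2]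
            have e2 : l.take (m+3+t) = xs ++ (a+1) :: 1 :: (b+1) :: ys.take t := by
              conv_lhs => rw [hsplit]
              rw [show m + 3 + t = xs.length + 3 + t by omega, take_mid3]
            have key : etaProd (l'.take (m+2+t)) = etaProd (l.take (m+3+t)) := by
              rw [e1, e2, etaProd_move]
            rw [key]
            exact hpp (m+3+t) (by omega) (by omega)
      have hrtg := ih l'.length (by omega) l' rfl hAP
      refine hrtg.tail ?_
      rw [hsplit]
      exact MoveI.interior xs ys a b
end

section
/- Let n ≥ 1, let κ ∈ ℂ with κ ≠ 0, and let (a_{jk}) be a symmetric matrix of complex numbers. Let U be the set of points z ∈ ℂⁿ such that for all j < k the difference z_j − z_k does not lie on the closed nonpositive real axis {w ∈ ℂ : Im w = 0 and Re w ≤ 0}. Define Ψ(z) = ∏_{j<k} (z_j − z_k)^{a_{jk}/κ} using the principal branch of the complex power. Then for every z ∈ U and every index i, the function of the single variable z_i (with the other coordinates fixed) is complex differentiable at z_i, and the abelian Knizhnik–Zamolodchikov equation holds: κ · ∂Ψ/∂z_i (z) = (∑_{j ≠ i} a_{ij}/(z_i − z_j)) · Ψ(z). -/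
/-! Each factor `(z_j - z_k) ^ c` of `Ψ` has logarithmic derivative `c (δ_ij - δ_ik) / (z_j - z_k)`
in `z_i`, so the logarithmic derivative of `Ψ` is the sum of these over the pairs `j < k`. Because
`a` is symmetric, `(j, k) ↦ a_jk / (z_j - z_k)` is antisymmetric, and the pairs with `j = i` and
those with `k = i` combine into `∑_{j ≠ i} a_ij / (z_i - z_j)`. -/

open Complex

/-- The explicit solution `Ψ(z) = ∏_{j<k} (z_j − z_k)^{a_{jk}/κ}` of the abelian
Knizhnik–Zamolodchikov equation, using the principal branch of the complex power. -/
noncomputable def abelianKZSolution (n : ℕ) (κ : ℂ) (a : Fin n → Fin n → ℂ)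
    (z : Fin n → ℂ) : ℂ :=
  ∏ p ∈ Finset.univ.filter (fun p : Fin n × Fin n => p.1 < p.2),
    (z p.1 - z p.2) ^ (a p.1 p.2 / κ)

open Finset

theorem HasDerivAt.finsetProd_of_logDeriv {ι 𝕜 𝔸 : Type*} [NontriviallyNormedField 𝕜]
    [NormedCommRing 𝔸] [NormedAlgebra 𝕜 𝔸] {s : Finset ι} {f : ι → 𝕜 → 𝔸} {g : ι → 𝔸} {x : 𝕜}
    (hf : ∀ i ∈ s, HasDerivAt (f i) (g i * f i x) x) :
    HasDerivAt (fun y => ∏ i ∈ s, f i y) ((∑ i ∈ s, g i) * ∏ i ∈ s, f i x) x := by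
  classical
  convert HasDerivAt.fun_finsetProd hf using 1
  rw [sum_mul]
  refine sum_congr rfl fun i hi => ?_
  rw [← mul_prod_erase s _ hi, smul_eq_mul]
  ring

theorem HasDerivAt.cpow_const_logDeriv {f : ℂ → ℂ} {f' x : ℂ} (c : ℂ) (hf : HasDerivAt f f' x)
    (hx : f x ∈ slitPlane) : HasDerivAt (fun y => f y ^ c) (c * f' / f x * f x ^ c) x := by
  convert hf.cpow_const hx using 1
  rw [cpow_sub _ _ (slitPlane_ne_zero hx), cpow_one]
  ring

theorem hasDerivAt_update_apply_sub_update_apply {ι 𝕜 : Type*} [DecidableEq ι]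
    [NontriviallyNormedField 𝕜] (z : ι → 𝕜) (i j k : ι) :
    HasDerivAt (fun w => Function.update z i w j - Function.update z i w k)
      ((Pi.single i 1 : ι → 𝕜) j - (Pi.single i 1 : ι → 𝕜) k) (z i) :=
  (hasDerivAt_pi.1 (hasDerivAt_update z i (z i)) j).sub
    (hasDerivAt_pi.1 (hasDerivAt_update z i (z i)) k)

theorem sum_lt_pairs_single_sub_single_mul {ι R : Type*} [Fintype ι] [LinearOrder ι] [CommRing R]
    (g : ι → ι → R) (hg : ∀ j k, g k j = -g j k) (i : ι) :
    ∑ p ∈ univ.filter (fun p : ι × ι => p.1 < p.2),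
        ((Pi.single i 1 : ι → R) p.1 - (Pi.single i 1 : ι → R) p.2) * g p.1 p.2 =
      ∑ j ∈ univ.erase i, g i j := by
  have left : ∑ p ∈ univ.filter (fun p : ι × ι => p.1 < p.2),
      (Pi.single i 1 : ι → R) p.1 * g p.1 p.2 = ∑ k ∈ univ.filter (i < ·), g i k := by
    rw [sum_filter, Fintype.sum_prod_type, sum_filter]
    simp only [Pi.single_apply, ite_mul, one_mul, zero_mul, ← ite_and, and_comm (a := _ < _)]
    simp [ite_and]
  have right : ∑ p ∈ univ.filter (fun p : ι × ι => p.1 < p.2),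
      (Pi.single i 1 : ι → R) p.2 * g p.1 p.2 = ∑ j ∈ univ.filter (· < i), g j i := by
    rw [sum_filter, Fintype.sum_prod_type_right, sum_filter]
    simp only [Pi.single_apply, ite_mul, one_mul, zero_mul, ← ite_and, and_comm (a := _ < _)]
    simp [ite_and]
  have split : ∑ j ∈ univ.erase i, g i j =
      ∑ k ∈ univ.filter (i < ·), g i k + ∑ j ∈ univ.filter (· < i), g i j := by
    rw [← sum_union (disjoint_filter.2 fun j _ h h' => lt_asymm h h')]
    congr 1
    ext j
    simp [lt_or_lt_iff_ne, ne_comm]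
  simp only [sub_mul, sum_sub_distrib, left, right]
  rw [split, sub_eq_add_neg, ← sum_neg_distrib]
  simp only [← hg]

theorem hasDerivAt_abelianKZSolution_update {n : ℕ} (κ : ℂ) (a : Fin n → Fin n → ℂ)
    {z : Fin n → ℂ} (hz : ∀ j k : Fin n, j < k → z j - z k ∈ slitPlane) (i : Fin n) :
    HasDerivAt (fun w => abelianKZSolution n κ a (Function.update z i w))
      ((∑ p ∈ univ.filter (fun p : Fin n × Fin n => p.1 < p.2),
          a p.1 p.2 / κ * ((Pi.single i 1 : Fin n → ℂ) p.1 - (Pi.single i 1 : Fin n → ℂ) p.2) /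
            (z p.1 - z p.2)) * abelianKZSolution n κ a z) (z i) := by
  have h := HasDerivAt.finsetProd_of_logDeriv
    fun p (hp : p ∈ univ.filter (fun p : Fin n × Fin n => p.1 < p.2)) =>
    (hasDerivAt_update_apply_sub_update_apply z i p.1 p.2).cpow_const_logDeriv (a p.1 p.2 / κ)
      (by simpa using hz p.1 p.2 (mem_filter.1 hp).2)
  simpa only [abelianKZSolution, Function.update_eq_self] using h

theorem abelianKZ_equation_general (n : ℕ) (κ : ℂ) (hκ : κ ≠ 0)
    (a : Fin n → Fin n → ℂ) (hsym : ∀ j k : Fin n, a j k = a k j)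
    (z : Fin n → ℂ)
    (hz : ∀ j k : Fin n, j < k → z j - z k ∈ Complex.slitPlane) (i : Fin n) :
    DifferentiableAt ℂ (fun w => abelianKZSolution n κ a (Function.update z i w)) (z i) ∧
      κ * deriv (fun w => abelianKZSolution n κ a (Function.update z i w)) (z i) =
        (∑ j ∈ Finset.univ.erase i, a i j / (z i - z j)) * abelianKZSolution n κ a z := by
  have hΨ := hasDerivAt_abelianKZSolution_update κ a hz i
  refine ⟨hΨ.differentiableAt, ?_⟩
  rw [hΨ.deriv, ← mul_assoc, mul_sum,
    ← sum_lt_pairs_single_sub_single_mul (fun j k => a j k / (z j - z k))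
      (fun j k => by rw [hsym, ← neg_sub, div_neg]) i]
  congr 1
  refine sum_congr rfl fun p _ => ?_
  field_simp

/-- On the region where all differences `z_j − z_k` (for `j < k`) avoid the closed
nonpositive real axis, `Ψ` is complex differentiable in each variable `z_i` and
satisfies the abelian Knizhnik–Zamolodchikov equation
`κ · ∂Ψ/∂z_i = (∑_{j ≠ i} a_{ij}/(z_i − z_j)) · Ψ`. -/
theorem abelianKZ_equation (n : ℕ) (hn : 1 ≤ n) (κ : ℂ) (hκ : κ ≠ 0)
    (a : Fin n → Fin n → ℂ) (hsym : ∀ j k : Fin n, a j k = a k j)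
    (z : Fin n → ℂ)
    (hz : ∀ j k : Fin n, j < k → z j - z k ∈ Complex.slitPlane) (i : Fin n) :
    DifferentiableAt ℂ (fun w => abelianKZSolution n κ a (Function.update z i w)) (z i) ∧
      κ * deriv (fun w => abelianKZSolution n κ a (Function.update z i w)) (z i) =
        (∑ j ∈ Finset.univ.erase i, a i j / (z i - z j)) * abelianKZSolution n κ a z :=
  abelianKZ_equation_general n κ hκ a hsym z hz i
end
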